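/- Let A be a cubic-matrix of order 3 and let B be obtained from A by interchanging two consecutive vertical layers (transposing two adjacent values of the third index). Then det₃(B) = −det₃(A). -/

import Mathlib

def det3 {F : Type*} [Field F] (A : Fin 3 → Fin 3 → Fin 3 → F) : F :=
  A 0 0 0 * A 1 1 1 * A 2 2 2 - A 0 0 0 * A 1 2 1 * A 2 1 2 - A 0 0 0 * A 1 1 2 * A 2 2 1 + A 0 0 0 * A 1 2 2 * A 2 1 1 - A 0 0 1 * A 1 1 0 * A 2 2 2 + A 0 0 1 * A 1 1 2 * A 2 2 0 + A 0 0 1 * A 1 2 0 * A 2 1 2 - A 0 0 1 * A 1 2 2 * A 2 1 0 + A 0 0 2 * A 1 1 0 * A 2 2 1 - A 0 0 2 * A 1 1 1 * A 2 2 0 - A 0 0 2 * A 1 2 0 * A 2 1 1 + A 0 0 2 * A 1 2 1 * A 2 1 0 - A 0 1 0 * A 1 0 1 * A 2 2 2 + A 0 1 0 * A 1 0 2 * A 2 2 1 + A 0 1 0 * A 1 2 1 * A 2 0 2 - A 0 1 0 * A 1 2 2 * A 2 0 1 + A 0 1 1 * A 1 0 0 * A 2 2 2 - A 0 1 1 *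 A 1 0 2 * A 2 2 0 - A 0 1 1 * A 1 2 0 * A 2 0 2 + A 0 1 1 * A 1 2 2 * A 2 0 0 - A 0 1 2 * A 1 0 0 * A 2 2 1 + A 0 1 2 * A 1 0 1 * A 2 2 0 + A 0 1 2 * A 1 2 0 * A 2 0 1 - A 0 1 2 * A 1 2 1 * A 2 0 0 + A 0 2 0 * A 1 0 1 * A 2 1 2 - A 0 2 0 * A 1 0 2 * A 2 1 1 - A 0 2 0 * A 1 1 1 * A 2 0 2 + A 0 2 0 * A 1 1 2 * A 2 0 1 - A 0 2 1 * A 1 0 0 * A 2 1 2 + A 0 2 1 * A 1 0 2 * A 2 1 0 + A 0 2 1 * A 1 1 0 * A 2 0 2 - A 0 2 1 * A 1 1 2 * A 2 0 0 + A 0 2 2 * A 1 0 0 * A 2 1 1 - A 0 2 2 * A 1 0 1 * A 2 1 0 - A 0 2 2 * A 1 1 0 * A 2 0 1 + A 0 2 2 * A 1 1 1 * A 2 0 0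

/-!
Read off the 36 terms, `det3 A` is `∑ π τ, sign π * sign τ * ∏ i, A i (π i) (τ i)`. Permuting the
third index by `σ` replaces `τ` with `σ * τ`, so reindexing the inner sum multiplies the whole
expression by `sign σ`, which is `-1` for a transposition.
-/

open Equiv Finset

theorem univ_perm_fin_three :
    (univ : Finset (Perm (Fin 3))) =
      {1, swap 0 1, swap 0 2, swap 1 2, swap 0 1 * swap 1 2, swap 1 2 * swap 0 1} := by
  decide

theorem sum_perm_fin_three {M : Type*} [AddCommMonoid M] (f : Perm (Fin 3) → M) :
    ∑ τ, f τ = f 1 + f (swap 0 1) + f (swap 0 2) + f (swap 1 2) + f (swap 0 1 * swap 1 2) +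
      f (swap 1 2 * swap 0 1) := by
  rw [univ_perm_fin_three, sum_insert (by decide), sum_insert (by decide), sum_insert (by decide),
    sum_insert (by decide), sum_insert (by decide), sum_singleton]
  abel

theorem det3_eq_sum_sign_mul_prod {F : Type*} [Field F] (A : Fin 3 → Fin 3 → Fin 3 → F) :
    det3 A = ∑ π : Perm (Fin 3), ∑ τ : Perm (Fin 3),
      (Perm.sign π * Perm.sign τ : F) * ∏ i, A i (π i) (τ i) := by
  simp only [det3, sum_perm_fin_three, Fin.prod_univ_three, Perm.sign_mul, Perm.sign_one,
    Perm.sign_swap (by decide : (0 : Fin 3) ≠ 1), Perm.sign_swap (by decide : (0 : Fin 3) ≠ 2),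
    Perm.sign_swap (by decide : (1 : Fin 3) ≠ 2), Perm.mul_apply, Perm.one_apply,
    swap_apply_left, swap_apply_right, swap_apply_of_ne_of_ne, ne_eq, Fin.reduceEq,
    not_false_eq_true]
  push_cast
  ring

theorem det3_comp_perm_right {F : Type*} [Field F] (A : Fin 3 → Fin 3 → Fin 3 → F)
    (σ : Perm (Fin 3)) : det3 (fun i j k => A i j (σ k)) = Perm.sign σ * det3 A := by
  rw [det3_eq_sum_sign_mul_prod, det3_eq_sum_sign_mul_prod, mul_sum]
  refine sum_congr rfl fun π _ => ?_
  rw [← Equiv.sum_comp (Equiv.mulLeft σ⁻¹), mul_sum]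
  refine sum_congr rfl fun τ _ => ?_
  simp only [coe_mulLeft, Perm.mul_apply, Perm.coe_inv, apply_symm_apply, Perm.sign_mul,
    Perm.sign_inv, Units.val_mul, Int.cast_mul]
  ring

theorem det3_swap_vertical_layers {F : Type*} [Field F]
    (A B : Fin 3 → Fin 3 → Fin 3 → F) (σ : Equiv.Perm (Fin 3))
    (hσ : σ = Equiv.swap 0 1 ∨ σ = Equiv.swap 1 2)
    (hB : ∀ i j k, B i j k = A i j (σ k)) :
    det3 B = -det3 A := by
  obtain rfl : B = fun i j k => A i j (σ k) := funext₃ hB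
  have hsign : Perm.sign σ = -1 := by
    rcases hσ with rfl | rfl <;> exact Perm.sign_swap (by decide)
  rw [det3_comp_perm_right, hsign]
  simp
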